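/- arXiv:1305.4548 — 2 statements merged into one kernel-verified Lean document; each statement's English description precedes it below -/
import Mathlib

section
/- Consider the update Q(t+1) = (I − δ(t)A(t))Q(t) − δ(t)B(t)Y(t) + δ(t)W(t)Y(t) with Q_i(0) = e_{X_i} for initial samples X_i ∈ [M], where Q(t) is F_t-measurable, the sampling distribution satisfies P(t) = Q(t) (so E[Y(t) | F_t] = Q(t)), W(t) and B(t) are conditionally independent of Y(t) given F_t, and the conditional-mean weight matrices satisfy the column-balance condition Σ_i W̄_ij(t) − Ā_jj(t) − B̄_jj(t) = 0 for all j and t. Then for all t, E[𝟏ᵀ Q(t)] = 𝟏ᵀ Q(0) = nΠ, where Π = (1/n) Σ_{i=1}^n e_{X_i} is the empirical distribution of the initial samples. -/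
/-!
Summing the update over agents, the column sums change by `δ(t) (𝟏ᵀ(W(t) − B(t))Y(t) − 𝟏ᵀA(t)Q(t))`.
Conditionally on `F_t` the first term becomes `𝟏ᵀ(W̄(t) − B̄(t))Q(t)` and, since `Q(t)` is
`F_t`-measurable, the second becomes `𝟏ᵀĀ(t)Q(t)`. Both `Ā` and `B̄` are diagonal, so the column
balance `𝟏ᵀW̄ − 𝟏ᵀB̄ = diag Ā` makes the two agree; hence the drift has zero mean and `E[𝟏ᵀQ(t)]`
stays at `𝟏ᵀQ(0) = nΠ`.
-/

open MeasureTheory Matrix Finset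

namespace Matrix

variable {R l n o : Type*} [Fintype n]

theorem sum_mul_apply [Fintype l] [NonUnitalNonAssocSemiring R] (N : Matrix l n R) (Q : Matrix n o R)
    (k : o) : ∑ i, (N * Q) i k = ∑ j, (∑ i, N i j) * Q j k := by
  simp only [mul_apply, sum_mul]
  exact sum_comm

theorem IsDiag.mul_apply [NonUnitalNonAssocSemiring R] {D : Matrix n n R} (hD : D.IsDiag)
    (Q : Matrix n o R) (i : n) (k : o) : (D * Q) i k = D i i * Q i k :=
  Fintype.sum_eq_single i fun _ hj => by simp only [hD (Ne.symm hj), zero_mul]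

theorem IsDiag.sum_col [AddCommMonoid R] {D : Matrix n n R} (hD : D.IsDiag) (j : n) :
    ∑ i, D i j = D j j :=
  Fintype.sum_eq_single j fun _ hi => hD hi

variable [CommRing R]

theorem sum_update_apply [DecidableEq n] {A B W : Matrix n n R} {Q Y : Matrix n o R}
    (hA : A.IsDiag) (δ : R) (k : o) :
    ∑ i, (((1 : Matrix n n R) - δ • A) * Q - δ • (B * Y) + δ • (W * Y)) i k
      = ∑ i, Q i k - δ * ∑ i, A i i * Q i k + δ * ∑ i, ((W - B) * Y) i k := by
  simp only [Matrix.sub_mul, Matrix.one_mul, Matrix.smul_mul, add_apply, sub_apply,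
    smul_apply, smul_eq_mul, hA.mul_apply, sum_add_distrib, sum_sub_distrib, ← mul_sum]
  ring

theorem sum_sub_mul_apply_of_balanced {Abar Bbar Wbar : Matrix n n R} (hB : Bbar.IsDiag)
    (hbal : ∀ j, ∑ i, Wbar i j - Abar j j - Bbar j j = 0) (Q : Matrix n o R) (k : o) :
    ∑ i, ((Wbar - Bbar) * Q) i k = ∑ j, Abar j j * Q j k := by
  rw [sum_mul_apply]
  refine sum_congr rfl fun j _ => ?_
  rw [Fintype.sum_congr _ _ fun i => sub_apply Wbar Bbar i j, sum_sub_distrib, hB.sum_col]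
  linear_combination hbal j * Q j k

end Matrix

section CondExp

variable {Ω : Type*} {m m0 : MeasurableSpace Ω} {μ : Measure Ω}

theorem integral_eq_of_condExp_ae_eq {E : Type*} [NormedAddCommGroup E] [NormedSpace ℝ E]
    [CompleteSpace E] (hm : m ≤ m0) [SigmaFinite (μ.trim hm)] {f g : Ω → E}
    (h : μ[f | m] =ᵐ[μ] μ[g | m]) : ∫ ω, f ω ∂μ = ∫ ω, g ω ∂μ := by
  rw [← integral_condExp hm, integral_congr_ae h, integral_condExp hm]

theorem ae_isDiag_of_condExp {ι : Type*} [Countable ι] {B Bbar : Ω → Matrix ι ι ℝ}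
    (hB : ∀ ω, (B ω).IsDiag)
    (hBbar : ∀ i j, μ[fun ω => B ω i j | m] =ᵐ[μ] fun ω => Bbar ω i j) :
    ∀ᵐ ω ∂μ, (Bbar ω).IsDiag := by
  have h : ∀ i j, i ≠ j → ∀ᵐ ω ∂μ, Bbar ω i j = 0 := fun i j hij => by
    have hzero : (fun ω => B ω i j) = 0 := funext fun ω => hB ω hij
    filter_upwards [hBbar i j] with ω hω
    rw [hzero, condExp_zero] at hω
    exact hω.symm
  simpa only [Matrix.IsDiag, Pairwise, ae_all_iff, Filter.eventually_imp_distrib_left] using h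

theorem condExp_sum_ae_eq {ι : Type*} {s : Finset ι} {f g : ι → Ω → ℝ}
    (hf : ∀ i ∈ s, Integrable (f i) μ) (h : ∀ i ∈ s, μ[f i | m] =ᵐ[μ] g i) :
    μ[fun ω => ∑ i ∈ s, f i ω | m] =ᵐ[μ] fun ω => ∑ i ∈ s, g i ω := by
  simpa only [sum_fn] using (condExp_finsetSum hf m).trans (eventuallyEq_sum h)

variable {ι κ : Type*} [Fintype ι]

theorem condExp_sum_diag_mul_apply_ae_eq {A Abar : Ω → Matrix ι ι ℝ} {Q : Ω → Matrix ι κ ℝ}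
    {k : κ} (hQ : ∀ j, StronglyMeasurable[m] fun ω => Q ω j k)
    (hA : ∀ j, Integrable (fun ω => A ω j j) μ)
    (hAQ : ∀ j, Integrable (fun ω => A ω j j * Q ω j k) μ)
    (hAbar : ∀ j, μ[fun ω => A ω j j | m] =ᵐ[μ] fun ω => Abar ω j j) :
    μ[fun ω => ∑ j, A ω j j * Q ω j k | m] =ᵐ[μ] fun ω => ∑ j, Abar ω j j * Q ω j k :=
  condExp_sum_ae_eq (fun j _ => hAQ j) fun j _ =>
    (condExp_mul_of_stronglyMeasurable_right (hQ j) (hAQ j) (hA j)).trans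
      ((hAbar j).mul Filter.EventuallyEq.rfl)

theorem condExp_sum_sub_mul_apply_ae_eq {Abar B Bbar W Wbar : Ω → Matrix ι ι ℝ}
    {Q Y : Ω → Matrix ι κ ℝ} {k : κ} (hB : ∀ ω, (B ω).IsDiag)
    (hBbar : ∀ i j, μ[fun ω => B ω i j | m] =ᵐ[μ] fun ω => Bbar ω i j)
    (hWBY : ∀ i, μ[fun ω => ((W ω - B ω) * Y ω) i k | m]
      =ᵐ[μ] fun ω => ((Wbar ω - Bbar ω) * Q ω) i k)
    (hbal : ∀ ω j, ∑ i, Wbar ω i j - Abar ω j j - Bbar ω j j = 0)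
    (hWBY_int : ∀ i, Integrable (fun ω => ((W ω - B ω) * Y ω) i k) μ) :
    μ[fun ω => ∑ i, ((W ω - B ω) * Y ω) i k | m] =ᵐ[μ] fun ω => ∑ j, Abar ω j j * Q ω j k := by
  refine (condExp_sum_ae_eq (fun i _ => hWBY_int i) fun i _ => hWBY i).trans ?_
  filter_upwards [ae_isDiag_of_condExp hB hBbar] with ω hBbar_diag
  exact Matrix.sum_sub_mul_apply_of_balanced hBbar_diag (hbal ω) _ _

end CondExp

theorem expected_column_sums_preserved_general {Ω : Type*} {m0 : MeasurableSpace Ω}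
    {μ : Measure Ω} [IsProbabilityMeasure μ]
    {n M : ℕ} (ℱ : Filtration ℕ m0)
    (X : Fin n → Fin M) (Pi : Fin M → ℝ)
    (hPi : ∀ m, Pi m = (1 / n : ℝ) * ∑ i, if X i = m then 1 else 0)
    (Q Y : ℕ → Ω → Matrix (Fin n) (Fin M) ℝ)
    (A B W Abar Bbar Wbar : ℕ → Ω → Matrix (Fin n) (Fin n) ℝ)
    (δ : ℕ → ℝ)
    (hAdiag : ∀ t ω, (A t ω).IsDiag) (hBdiag : ∀ t ω, (B t ω).IsDiag)
    -- initial condition: `Q_i(0) = e_{X_i}`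
    (hQ0 : ∀ ω i m, Q 0 ω i m = if X i = m then 1 else 0)
    -- `Q(t)` is `F_t`-measurable
    (hQmeas : ∀ t i j, Measurable[ℱ t] fun ω => Q t ω i j)
    -- the update rule
    (hupdate : ∀ t ω, Q (t+1) ω = ((1 : Matrix (Fin n) (Fin n) ℝ) - δ t • A t ω) * Q t ω
      - δ t • (B t ω * Y t ω) + δ t • (W t ω * Y t ω))
    -- conditional-mean weight matrices
    (hAbar : ∀ t i j, μ[fun ω => A t ω i j | ℱ t] =ᵐ[μ] fun ω => Abar t ω i j)
    (hBbar : ∀ t i j, μ[fun ω => B t ω i j | ℱ t] =ᵐ[μ] fun ω => Bbar t ω i j)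
    -- conditional independence of `W(t), B(t)` and `Y(t)` given `F_t`, in the form
    -- `E[(W(t) − B(t))Y(t) | F_t] = (W̄(t) − B̄(t))Q(t)`
    (hWBY : ∀ t i j, μ[fun ω => ((W t ω - B t ω) * Y t ω) i j | ℱ t]
      =ᵐ[μ] fun ω => ((Wbar t ω - Bbar t ω) * Q t ω) i j)
    -- balanced column sums
    (hbal : ∀ t ω j, ∑ i, Wbar t ω i j - Abar t ω j j - Bbar t ω j j = 0)
    -- integrability of the relevant quantities
    (hIntQ : ∀ t i m, Integrable (fun ω => Q t ω i m) μ)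
    (hIntA : ∀ t j, Integrable (fun ω => A t ω j j) μ)
    (hIntAQ : ∀ t j m, Integrable (fun ω => A t ω j j * Q t ω j m) μ)
    (hIntWBY : ∀ t i m, Integrable (fun ω => ((W t ω - B t ω) * Y t ω) i m) μ) :
    ∀ t m, ∫ ω, (∑ i, Q t ω i m) ∂μ = n * Pi m := by
  intro t m
  induction t with
  | zero =>
    simp only [hQ0, integral_const, probReal_univ, one_smul, hPi]
    rcases Nat.eq_zero_or_pos n with rfl | hn
    · simp
    · field_simp
  | succ t ih =>
    have hstep : ∀ ω, ∑ i, Q (t + 1) ω i m = ∑ i, Q t ω i m - δ t * ∑ i, A t ω i i * Q t ω i m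
        + δ t * ∑ i, ((W t ω - B t ω) * Y t ω) i m := fun ω => by
      rw [hupdate]
      exact Matrix.sum_update_apply (hAdiag t ω) _ _
    have hdrift : ∫ ω, ∑ i, ((W t ω - B t ω) * Y t ω) i m ∂μ
        = ∫ ω, ∑ i, A t ω i i * Q t ω i m ∂μ :=
      integral_eq_of_condExp_ae_eq (ℱ.le t)
        ((condExp_sum_sub_mul_apply_ae_eq (hBdiag t) (hBbar t) (fun i => hWBY t i m) (hbal t)
          fun i => hIntWBY t i m).trans
        (condExp_sum_diag_mul_apply_ae_eq (fun j => (hQmeas t j m).stronglyMeasurable)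
          (hIntA t) (fun j => hIntAQ t j m) fun j => hAbar t j j).symm)
    have hQ_int := integrable_finsetSum univ fun i _ => hIntQ t i m
    have hAQ_int := (integrable_finsetSum univ fun i _ => hIntAQ t i m).const_mul (δ t)
    have hWBY_int := (integrable_finsetSum univ fun i _ => hIntWBY t i m).const_mul (δ t)
    simp_rw [hstep]
    rw [integral_add (by exact hQ_int.sub hAQ_int) hWBY_int, integral_sub hQ_int hAQ_int,
      integral_const_mul, integral_const_mul, hdrift, ih]
    ring

/-- Under the hypotheses of Lemma 2 (update rule with `P(t) = Q(t)`,
conditional independence of `W(t), B(t)` from `Y(t)`, and balanced column sums), with initial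
condition `Q_i(0) = e_{X_i}`, the expected column sums are preserved:
`E[𝟏ᵀQ(t)] = 𝟏ᵀQ(0) = nΠ`, where `Π` is the empirical distribution of the `X_i`. -/
theorem expected_column_sums_preserved {Ω : Type*} {m0 : MeasurableSpace Ω}
    {μ : Measure Ω} [IsProbabilityMeasure μ]
    {n M : ℕ} (ℱ : Filtration ℕ m0)
    (X : Fin n → Fin M) (Pi : Fin M → ℝ)
    (hPi : ∀ m, Pi m = (1 / n : ℝ) * ∑ i, if X i = m then 1 else 0)
    (Q Y : ℕ → Ω → Matrix (Fin n) (Fin M) ℝ)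
    (A B W Abar Bbar Wbar : ℕ → Ω → Matrix (Fin n) (Fin n) ℝ)
    (δ : ℕ → ℝ)
    (hAdiag : ∀ t ω, (A t ω).IsDiag) (hBdiag : ∀ t ω, (B t ω).IsDiag)
    -- initial condition: `Q_i(0) = e_{X_i}`
    (hQ0 : ∀ ω i m, Q 0 ω i m = if X i = m then 1 else 0)
    -- `Q(t)` is `F_t`-measurable
    (hQmeas : ∀ t i j, Measurable[ℱ t] fun ω => Q t ω i j)
    -- the update rule
    (hupdate : ∀ t ω, Q (t+1) ω = ((1 : Matrix (Fin n) (Fin n) ℝ) - δ t • A t ω) * Q t ω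
      - δ t • (B t ω * Y t ω) + δ t • (W t ω * Y t ω))
    -- the sampling distribution satisfies `P(t) = Q(t)`: `E[Y(t)|F_t] = Q(t)`
    (hY : ∀ t i j, μ[fun ω => Y t ω i j | ℱ t] =ᵐ[μ] fun ω => Q t ω i j)
    -- conditional-mean weight matrices
    (hAbar : ∀ t i j, μ[fun ω => A t ω i j | ℱ t] =ᵐ[μ] fun ω => Abar t ω i j)
    (hBbar : ∀ t i j, μ[fun ω => B t ω i j | ℱ t] =ᵐ[μ] fun ω => Bbar t ω i j)
    (hWbar : ∀ t i j, μ[fun ω => W t ω i j | ℱ t] =ᵐ[μ] fun ω => Wbar t ω i j)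
    -- conditional independence of `W(t), B(t)` and `Y(t)` given `F_t`, in the form
    -- `E[(W(t) − B(t))Y(t) | F_t] = (W̄(t) − B̄(t))Q(t)`
    (hWBY : ∀ t i j, μ[fun ω => ((W t ω - B t ω) * Y t ω) i j | ℱ t]
      =ᵐ[μ] fun ω => ((Wbar t ω - Bbar t ω) * Q t ω) i j)
    -- balanced column sums
    (hbal : ∀ t ω j, ∑ i, Wbar t ω i j - Abar t ω j j - Bbar t ω j j = 0)
    -- integrability of the relevant quantities
    (hIntQ : ∀ t i m, Integrable (fun ω => Q t ω i m) μ)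
    (hIntA : ∀ t j, Integrable (fun ω => A t ω j j) μ)
    (hIntAQ : ∀ t j m, Integrable (fun ω => A t ω j j * Q t ω j m) μ)
    (hIntWBY : ∀ t i m, Integrable (fun ω => ((W t ω - B t ω) * Y t ω) i m) μ) :
    ∀ t m, ∫ ω, (∑ i, Q t ω i m) ∂μ = n * Pi m :=
  expected_column_sums_preserved_general ℱ X Pi hPi Q Y A B W Abar Bbar Wbar δ hAdiag hBdiag hQ0
    hQmeas hupdate hAbar hBbar hWBY hbal hIntQ hIntA hIntAQ hIntWBY
end

section
/- Let G be an undirected graph on n nodes with neighborhoods N_i, and let messages Y_1, …, Y_n ∈ {0, e_1, …, e_M} ⊂ ℝ^M be arbitrary. Define N_i = #{j ∈ N_i : Y_j ≠ 0} and update Q_i(t+1) = Q_i(t) if Y_i = 0, and Q_i(t+1) = Q_i(t) − δ N_i Y_i + δ Σ_{j ∈ N_i} Y_j if Y_i ≠ 0, for any δ ∈ ℝ. Then the column sums are conserved: Σ_{i=1}^n Q_{i,m}(t+1) = Σ_{i=1}^n Q_{i,m}(t) for every m ∈ [M]; equivalently 𝟏ᵀ Q(t+1) = 𝟏ᵀ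 Q(t) on every sample path. -/
/-!
Node `i` changes its estimate by `δ (Y_j - Y_i)` for every neighbour `j` such that both `i` and `j`
speak, so the total change is a sum over the directed edges of the graph of a term that is
antisymmetric in the two endpoints. Reversing edges pairs these terms off, and the total change
vanishes.
-/

open Matrix Finset

def elemVec {M : ℕ} (m : Fin M) : Fin M → ℝ := fun m' => if m' = m then 1 else 0

theorem SimpleGraph.sum_sum_neighborFinset_eq_zero {V R : Type*} [Fintype V] [AddCommGroup R]
    (G : SimpleGraph V) [DecidableRel G.Adj] (f : V → V → R)
    (hf : ∀ i j, G.Adj i j → f j i = -f i j) :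
    ∑ i, ∑ j ∈ G.neighborFinset i, f i j = 0 := by
  have hpairs : ∑ i, ∑ j ∈ G.neighborFinset i, f i j
      = ∑ p ∈ univ.filter (fun p : V × V => G.Adj p.1 p.2), f p.1 p.2 := by
    rw [sum_filter, ← univ_product_univ, sum_product]
    simp only [neighborFinset_eq_filter, sum_filter]
  rw [hpairs]
  refine sum_involution (fun p _ => p.swap) (fun p hp => ?_) (fun p hp _ => ?_)
    (by simp [G.adj_comm]) (by simp)
  · rw [Prod.fst_swap, Prod.snd_swap, hf _ _ (mem_filter.1 hp).2, add_neg_cancel]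
  · exact fun h => (mem_filter.1 hp).2.ne (congrArg Prod.fst h).symm

theorem Finset.sum_sub_card_filter_smul {ι R : Type*} [AddCommGroup R] (s : Finset ι)
    (p : ι → Prop) [DecidablePred p] (y : ι → R) (c : R) (hy : ∀ j ∈ s, ¬p j → y j = 0) :
    ∑ j ∈ s, y j - #(s.filter p) • c = ∑ j ∈ s, if p j then y j - c else 0 := by
  rw [← sum_filter, sum_sub_distrib, sum_const, sum_filter_of_ne fun j hj hyj => not_not.1 <|
    mt (hy j hj) hyj]

open scoped Classical in
theorem column_sums_conserved_general {n M : ℕ}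
    (G : SimpleGraph (Fin n)) [DecidableRel G.Adj]
    (δ : ℝ) (Q Qnext Y : Fin n → Fin M → ℝ)
    -- the update rule
    (hupd0 : ∀ i, Y i = 0 → Qnext i = Q i)
    (hupd1 : ∀ i, Y i ≠ 0 → ∀ m, Qnext i m
      = Q i m - δ * (((G.neighborFinset i).filter fun j => Y j ≠ 0).card : ℝ) * Y i m
        + δ * ∑ j ∈ G.neighborFinset i, Y j m) :
    ∀ m, ∑ i, Qnext i m = ∑ i, Q i m := by
  intro m
  set exchange : Fin n → Fin n → ℝ :=
    fun i j => if Y i ≠ 0 ∧ Y j ≠ 0 then δ * (Y j m - Y i m) else 0 with hexchange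
  have hnode : ∀ i, Qnext i m = Q i m + ∑ j ∈ G.neighborFinset i, exchange i j := by
    intro i
    by_cases hYi : Y i = 0
    · simp [hupd0 i hYi, hexchange, hYi]
    · have hsilent : ∀ j ∈ G.neighborFinset i, ¬Y j ≠ 0 → Y j m = 0 := fun j _ hj => by
        rw [not_not.1 hj, Pi.zero_apply]
      have hcollect := sum_sub_card_filter_smul _ _ _ (Y i m) hsilent
      rw [nsmul_eq_mul] at hcollect
      simp only [hexchange, hYi, ne_eq, not_false_eq_true, true_and, ← mul_ite_zero, ← mul_sum,
        ← hcollect, hupd1 i hYi m]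
      ring
  have hanti : ∀ i j, G.Adj i j → exchange j i = -exchange i j := fun i j _ => by
    simp only [hexchange, and_comm (a := Y j ≠ 0)]
    split_ifs <;> ring
  simp only [hnode, sum_add_distrib, G.sum_sum_neighborFinset_eq_zero _ hanti, add_zero]

open scoped Classical in
/-- Mass exchange / mean preservation: for the censored exchange update
`Q_i(t+1) = Q_i(t)` if `Y_i = 0` and
`Q_i(t+1) = Q_i(t) − δ N_i Y_i + δ Σ_{j∈N_i} Y_j` if `Y_i ≠ 0`, where
`N_i = #{j ∈ N_i : Y_j ≠ 0}`, the column sums are conserved on every sample path: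
`𝟏ᵀQ(t+1) = 𝟏ᵀQ(t)`. -/
theorem column_sums_conserved {n M : ℕ}
    (G : SimpleGraph (Fin n)) [DecidableRel G.Adj]
    (δ : ℝ) (Q Qnext Y : Fin n → Fin M → ℝ)
    -- messages lie in `{0, e_1, …, e_M}`
    (hYval : ∀ i, Y i = 0 ∨ ∃ m, Y i = elemVec m)
    -- the update rule
    (hupd0 : ∀ i, Y i = 0 → Qnext i = Q i)
    (hupd1 : ∀ i, Y i ≠ 0 → ∀ m, Qnext i m
      = Q i m - δ * (((G.neighborFinset i).filter fun j => Y j ≠ 0).card : ℝ) * Y i m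
        + δ * ∑ j ∈ G.neighborFinset i, Y j m) :
    ∀ m, ∑ i, Qnext i m = ∑ i, Q i m :=
  column_sums_conserved_general G δ Q Qnext Y hupd0 hupd1
end
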